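/- arXiv:2204.13756 — 3 statements merged into one kernel-verified Lean document; each statement's English description precedes it below -/
import Mathlib

section
/- (Robinson's test) A τ-theory T is model complete if and only if for all models M ⊆ N of T, M is an existentially closed substructure of N (every existential formula with parameters in M true in N is true in M). -/
open FirstOrder FirstOrder.Language

universe u v w

namespace ModelCompanionship

variable {L : FirstOrder.Language.{u, v}}

/-- Existentially quantify away the last `k` free variables of a bounded formula. -/
def exsN : ∀ {n k : ℕ}, L.BoundedFormula Empty (n + k) → L.BoundedFormula Empty n
  | _, 0, φ => φ
  | _, _ + 1, φ => exsN φ.ex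

/-- A sentence is universal if it is of the form `∀ x̄, ψ` with `ψ` quantifier-free. -/
def IsUniversalSentence (φ : L.Sentence) : Prop :=
  ∃ (n : ℕ) (ψ : L.BoundedFormula Empty n), ψ.IsQF ∧ φ = ψ.alls

/-- A sentence is Π₂ if it is of the form `∀ x̄ ∃ ȳ, ψ` with `ψ` quantifier-free. -/
def IsPi2Sentence (φ : L.Sentence) : Prop :=
  ∃ (n k : ℕ) (ψ : L.BoundedFormula Empty (n + k)), ψ.IsQF ∧ φ = (exsN ψ).alls

/-- `T_∀`: the universal consequences of `T`. -/
def univFragment (T : L.Theory) : L.Theory :=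
  {φ | IsUniversalSentence φ ∧ T ⊨ᵇ φ}

/-- Boolean combinations of universal sentences. -/
inductive IsBCU : L.Sentence → Prop
  | of_univ {φ} : IsUniversalSentence φ → IsBCU φ
  | not {φ} : IsBCU φ → IsBCU φ.not
  | sup {φ ψ} : IsBCU φ → IsBCU ψ → IsBCU (φ ⊔ ψ)

/-- `T_{∀∨∃}`: the consequences of `T` that are boolean combinations of universal
sentences. -/
def bcuFragment (T : L.Theory) : L.Theory :=
  {φ | IsBCU φ ∧ T ⊨ᵇ φ}

/-- An embedding is Σ₁-elementary if existential formulas with parameters in the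
domain transfer down from the codomain. -/
def IsSigma1Map {M : Type*} {N : Type*} [L.Structure M] [L.Structure N]
    (f : M ↪[L] N) : Prop :=
  ∀ (m n : ℕ) (φ : L.BoundedFormula (Fin m) n), φ.IsQF →
    ∀ v : Fin m → M, (φ.exs).Realize ((f : M → N) ∘ v) → (φ.exs).Realize v

/-- An embedding is elementary: it preserves all first-order formulas with parameters. -/
def IsElementaryMap {M : Type*} {N : Type*} [L.Structure M] [L.Structure N]
    (f : M ↪[L] N) : Prop :=
  ∀ (m : ℕ) (φ : L.Formula (Fin m)) (v : Fin m → M),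
    φ.Realize ((f : M → N) ∘ v) ↔ φ.Realize v

/-- `M` is `T`-existentially closed. -/
def IsEC (T : L.Theory) (M : Type w) [L.Structure M] : Prop :=
  (∃ N : Theory.ModelType.{u, v, max u v w} T, Nonempty (M ↪[L] N)) ∧
    ∀ (P : Theory.ModelType.{u, v, max u v w} T) (f : M ↪[L] P), IsSigma1Map f

/-- A theory is model complete if every embedding between its models is elementary. -/
def IsModelComplete (T : L.Theory) : Prop :=
  ∀ (M N : Theory.ModelType.{u, v, max u v} T) (f : M ↪[L] N), IsElementaryMap f

/-- `R` is a model companion of `T`. -/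
def IsModelCompanion (R T : L.Theory) : Prop :=
  IsModelComplete R ∧ univFragment R = univFragment T

/-- `R` is an absolute model companion (AMC) of `T`. -/
def IsAMC (R T : L.Theory) : Prop :=
  IsModelComplete R ∧ bcuFragment R = bcuFragment T

noncomputable def diagSentence {N : Type w} {k : ℕ} (φ : L.Formula (Fin k)) (b : Fin k → N) :
    L[[N]].Sentence :=
  (L.lhomWithConstantsMap b).onSentence (Formula.equivSentence φ)

/-- The quantifier-free diagram of `N`. -/
def diagTheory (N : Type w) [L.Structure N] : L[[N]].Theory :=
  {θ | ∃ (k : ℕ) (φ : L.Formula (Fin k)) (b : Fin k → N),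
    φ.IsQF ∧ φ.Realize b ∧ θ = diagSentence φ b}


theorem realize_diagSentence {N : Type w} {P : Type*} [L.Structure P] [L[[N]].Structure P]
    [(L.lhomWithConstants N).IsExpansionOn P] {k : ℕ} (φ : L.Formula (Fin k)) (b : Fin k → N) :
    (diagSentence φ b).Realize P ↔ φ.Realize (fun i => ((L.con (b i) : L[[N]].Constants) : P)) := by
  letI : (constantsOn (Fin k)).Structure P :=
    constantsOn.structure (fun i => ((L.con (b i) : L[[N]].Constants) : P))
  haveI : (L.lhomWithConstantsMap b).IsExpansionOn P := by
    constructor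
    · intro n F x
      cases F with
      | inl F => exact (L.lhomWithConstants N).map_onFunction F x
      | inr c =>
        cases n with
        | zero =>
          have hx : x = default := funext fun i => i.elim0
          subst hx
          rfl
        | succ n => exact c.elim
    · intro n R x
      cases R with
      | inl R => exact (L.lhomWithConstants N).map_onRelation R x
      | inr r => exact r.elim
  rw [diagSentence, LHom.realize_onSentence, Formula.realize_equivSentence]
  rfl

theorem realize_relabel_formula {P : Type*} [L.Structure P] {α β : Type*} {n : ℕ}
    (φ : L.Formula α) (g : α → β ⊕ (Fin n)) (v : β → P) (xs : Fin n → P) :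
    (BoundedFormula.relabel g φ).Realize v xs ↔ φ.Realize (Sum.elim v xs ∘ g) := by
  rw [BoundedFormula.realize_relabel]
  have h1 : xs ∘ Fin.castAdd 0 = xs := funext fun i => congrArg xs (Fin.ext rfl)
  rw [h1]
  exact iff_of_eq (congrArg _ (Subsingleton.elim _ _))

theorem isQF_foldr_inf {α : Type*} {n : ℕ} (l : List (L.BoundedFormula α n))
    (h : ∀ φ ∈ l, φ.IsQF) : (l.foldr (· ⊓ ·) ⊤).IsQF := by
  induction l with
  | nil => exact BoundedFormula.IsQF.top
  | cons a l ih =>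
      exact ((h a (List.mem_cons_self (a := a) (l := l))).inf
        (ih fun φ hφ => h φ (List.mem_cons_of_mem _ hφ)))

/-- Conjunction of the formulas indexed by a finset (the former `BoundedFormula.iInf`). -/
noncomputable def finsetIInf {α β : Type*} {n : ℕ} (s : Finset β) (f : β → L.BoundedFormula α n) :
    L.BoundedFormula α n :=
  (s.toList.map f).foldr (· ⊓ ·) ⊤

theorem realize_finsetIInf {P : Type*} [L.Structure P] {α β : Type*} {n : ℕ} (s : Finset β)
    (f : β → L.BoundedFormula α n) (v : α → P) (v' : Fin n → P) :
    (finsetIInf s f).Realize v v' ↔ ∀ b ∈ s, (f b).Realize v v' := by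
  simp only [finsetIInf, BoundedFormula.realize_foldr_inf, List.mem_map, Finset.mem_toList,
    forall_exists_index, and_imp, forall_apply_eq_imp_iff₂]

theorem isQF_iInf {α β : Type*} {n : ℕ} (s : Finset β) (f : β → L.BoundedFormula α n)
    (h : ∀ b ∈ s, (f b).IsQF) : (finsetIInf s f).IsQF := by
  apply isQF_foldr_inf
  intro φ hφ
  obtain ⟨b, hb, rfl⟩ := List.mem_map.1 hφ
  exact h b (Finset.mem_toList.1 hb)

theorem diag_isSatisfiable {M N : Type (max u v)} [L.Structure M] [L.Structure N] [Nonempty M]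
    (f : M ↪[L] N)
    (hf : ∀ (m n : ℕ) (φ : L.BoundedFormula (Fin m) n), φ.IsQF →
      ∀ v : Fin m → M, (φ.exs).Realize ((f : M → N) ∘ v) → (φ.exs).Realize v) :
    (((L.lhomWithConstantsMap (f : M → N)).onTheory (L.elementaryDiagram M)) ∪
      diagTheory N).IsSatisfiable := by
  classical
  rw [Theory.isSatisfiable_iff_isFinitelySatisfiable]
  intro T0 hT0
  have hD : ∀ θ ∈ T0.filter (· ∈ diagTheory (L := L) N),
      ∃ (k : ℕ) (φ : L.Formula (Fin k)) (b : Fin k → N),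
        φ.IsQF ∧ φ.Realize b ∧ θ = diagSentence φ b :=
    fun θ hθ => (Finset.mem_filter.1 hθ).2
  set Dp := T0.filter (· ∈ diagTheory (L := L) N) with hDp
  choose k φ b hQF hReal hEq using hD
  set S : Finset N := Dp.attach.biUnion (fun θ => Finset.univ.image (b θ.1 θ.2)) with hS
  have hbS : ∀ (θ) (hθ : θ ∈ Dp) (j), b θ hθ j ∈ S := by
    intro θ hθ j
    exact Finset.mem_biUnion.2 ⟨⟨θ, hθ⟩, Dp.mem_attach _,
      Finset.mem_image_of_mem _ (Finset.mem_univ j)⟩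
  set idx : (a : N) → a ∈ S → Fin S.card := fun a h => S.equivFin ⟨a, h⟩ with hidx
  set σ : Fin S.card → N := fun i => (S.equivFin.symm i : N) with hσ
  have hσidx : ∀ a h, σ (idx a h) = a := fun a h => by simp [hσ, hidx]
  set P : Finset N := S.filter (fun a => ∃ a₀ : M, f a₀ = a) with hP
  set τ : Fin P.card → N := fun i => (P.equivFin.symm i : N) with hτ
  have hτS : ∀ i, τ i ∈ S := fun i => (Finset.mem_filter.1 (P.equivFin.symm i).2).1
  have hτrange : ∀ i, ∃ a₀ : M, f a₀ = τ i := fun i => (Finset.mem_filter.1 (P.equivFin.symm i).2).2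
  set vM : Fin P.card → M := fun i => Classical.choose (hτrange i) with hvM
  have hfvM : ∀ i, f (vM i) = τ i := fun i => Classical.choose_spec (hτrange i)
  set χ₁ : L.BoundedFormula (Fin P.card) S.card := finsetIInf Dp.attach
    (fun θ => BoundedFormula.relabel
      (fun j => Sum.inr (idx (b θ.1 θ.2 j) (hbS θ.1 θ.2 j))) (φ θ.1 θ.2)) with hχ₁
  set χ₂ : L.BoundedFormula (Fin P.card) S.card := finsetIInf Finset.univ
    (fun i : Fin P.card => Term.bdEqual (Term.var (Sum.inl i))
      (Term.var (Sum.inr (idx (τ i) (hτS i))))) with hχ₂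
  have hχQF : (χ₁ ⊓ χ₂).IsQF := by
    refine BoundedFormula.IsQF.inf ?_ ?_
    · exact isQF_iInf _ _ fun θ _ => (hQF θ.1 θ.2).relabel _
    · exact isQF_iInf _ _ fun i _ => (BoundedFormula.IsAtomic.equal _ _).isQF
  have hN : (χ₁ ⊓ χ₂).Realize ((f : M → N) ∘ vM) σ := by
    rw [BoundedFormula.realize_inf]
    constructor
    · rw [hχ₁, realize_finsetIInf]
      intro θ hθ
      rw [realize_relabel_formula]
      have heq : (Sum.elim ((f : M → N) ∘ vM) σ ∘
          fun j => Sum.inr (idx (b θ.1 θ.2 j) (hbS θ.1 θ.2 j))) = b θ.1 θ.2 :=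
        funext fun j => hσidx _ _
      rw [heq]
      exact hReal θ.1 θ.2
    · rw [hχ₂, realize_finsetIInf]
      intro i _
      rw [BoundedFormula.realize_bdEqual]
      simp only [Term.realize_var, Sum.elim_inl, Sum.elim_inr, Function.comp_apply]
      rw [hσidx (τ i) (hτS i), hfvM]
  have hMexs : ((χ₁ ⊓ χ₂).exs).Realize vM :=
    hf _ _ _ hχQF vM (BoundedFormula.realize_exs.2 ⟨σ, hN⟩)
  obtain ⟨xs, hxs⟩ := BoundedFormula.realize_exs.1 hMexs
  rw [BoundedFormula.realize_inf] at hxs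
  obtain ⟨hx1, hx2⟩ := hxs
  set c : N → M := fun a => if h : a ∈ S then xs (idx a h)
    else if h' : ∃ a₀, f a₀ = a then Classical.choose h' else Classical.arbitrary M with hc
  have hcS : ∀ a (h : a ∈ S), c a = xs (idx a h) := by
    intro a h
    rw [hc]
    simp only [dif_pos h]
  have hcf : c ∘ (f : M → N) = id := by
    funext a₀
    simp only [Function.comp_apply, id_eq]
    by_cases h : f a₀ ∈ S
    · rw [hcS _ h]
      have hP' : f a₀ ∈ P := Finset.mem_filter.2 ⟨h, ⟨a₀, rfl⟩⟩
      set i := P.equivFin ⟨f a₀, hP'⟩ with hi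
      have hτi : τ i = f a₀ := by simp [hτ, hi]
      have h2 := (realize_finsetIInf _ _ _ _).1 hx2 i (Finset.mem_univ i)
      rw [BoundedFormula.realize_bdEqual] at h2
      simp only [Term.realize_var, Sum.elim_inl, Sum.elim_inr] at h2
      have hvMi : vM i = a₀ := f.injective (by rw [hfvM i, hτi])
      have hsub : (⟨τ i, hτS i⟩ : {x // x ∈ S}) = ⟨f a₀, h⟩ := Subtype.ext hτi
      have hidx2 : idx (τ i) (hτS i) = idx (f a₀) h := congrArg S.equivFin hsub
      rw [hidx2] at h2
      rw [← h2, hvMi]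
    · rw [hc]
      simp only [dif_neg h]
      rw [dif_pos ⟨a₀, rfl⟩]
      exact f.injective (Classical.choose_spec (⟨a₀, rfl⟩ : ∃ a₁, f a₁ = f a₀))
  -- now build the model on M
  letI cOn : (constantsOn N).Structure M := constantsOn.structure c
  letI : L[[N]].Structure M := L.withConstantsStructure N
  haveI hexp : (L.lhomWithConstantsMap (f : M → N)).IsExpansionOn M := by
    haveI : (LHom.constantsOnMap (f : M → N)).IsExpansionOn M :=
      constantsOnMap_isExpansionOn hcf
    exact LHom.sumMap_isExpansionOn _ _ _
  have hMdlE : M ⊨ (L.lhomWithConstantsMap (f : M → N)).onTheory (L.elementaryDiagram M) :=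
    (LHom.onTheory_model _ _).2 inferInstance
  haveI : M ⊨ (T0 : L[[N]].Theory) := by
    refine ⟨fun {θ} hθ => ?_⟩
    by_cases hd : θ ∈ diagTheory (L := L) N
    · have hθD : θ ∈ Dp := Finset.mem_filter.2 ⟨hθ, hd⟩
      have h1 := (realize_finsetIInf _ _ _ _).1 hx1 ⟨θ, hθD⟩ (Dp.mem_attach _)
      rw [realize_relabel_formula] at h1
      rw [hEq θ hθD, realize_diagSentence]
      have heq : (fun j => ((L.con (b θ hθD j) : L[[N]].Constants) : M)) =
          (Sum.elim vM xs ∘ fun j => Sum.inr (idx (b θ hθD j) (hbS θ hθD j))) := by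
        funext j
        show c (b θ hθD j) = xs (idx (b θ hθD j) (hbS θ hθD j))
        exact hcS _ _
      rw [heq]
      exact h1
    · have hθE : θ ∈ (L.lhomWithConstantsMap (f : M → N)).onTheory (L.elementaryDiagram M) :=
        (hT0 hθ).resolve_right hd
      exact hMdlE.realize_of_mem θ hθE
  exact ⟨Theory.ModelType.of _ M⟩

theorem exists_extension {M N : Type (max u v)} [L.Structure M] [L.Structure N] [Nonempty M]
    (f : M ↪[L] N)
    (hf : ∀ (m n : ℕ) (φ : L.BoundedFormula (Fin m) n), φ.IsQF →
      ∀ v : Fin m → M, (φ.exs).Realize ((f : M → N) ∘ v) → (φ.exs).Realize v) :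
    ∃ (Q : CategoryTheory.Bundled.{max u v, max u v} L.Structure) (e : M ↪ₑ[L] Q) (g : N ↪[L] Q),
      ∀ a : M, g (f a) = e a := by
  obtain ⟨M₀⟩ := diag_isSatisfiable f hf
  letI : L.Structure M₀ := (L.lhomWithConstants N).reduct M₀
  haveI : (L.lhomWithConstants N).IsExpansionOn (M₀ : Type (max u v)) :=
    LHom.isExpansionOn_reduct _ _
  haveI hMD : (M₀ : Type (max u v)) ⊨ diagTheory (L := L) N :=
    Theory.Model.mono (T' := (L.lhomWithConstantsMap (f : M → N)).onTheory
      (L.elementaryDiagram M) ∪ diagTheory (L := L) N) inferInstance Set.subset_union_right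
  haveI hME : (M₀ : Type (max u v)) ⊨
      (L.lhomWithConstantsMap (f : M → N)).onTheory (L.elementaryDiagram M) :=
    Theory.Model.mono (T' := (L.lhomWithConstantsMap (f : M → N)).onTheory
      (L.elementaryDiagram M) ∪ diagTheory (L := L) N) inferInstance Set.subset_union_left
  -- the elementary embedding
  letI : L[[M]].Structure M₀ := (L.lhomWithConstantsMap (f : M → N)).reduct M₀
  haveI : (L.lhomWithConstants M).IsExpansionOn (M₀ : Type (max u v)) :=
    ⟨fun _ _ => rfl, fun _ _ => rfl⟩
  haveI : (M₀ : Type (max u v)) ⊨ L.elementaryDiagram M :=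
    (LHom.onTheory_model _ _).1 hME
  let e : M ↪ₑ[L] M₀ := ElementaryEmbedding.ofModelsElementaryDiagram L M M₀
  -- the plain embedding
  let gm : N → M₀ := fun a => ((L.con a : L[[N]].Constants) : M₀)
  have hDreal : ∀ {kk : ℕ} (ψ : L.Formula (Fin kk)) (bb : Fin kk → N),
      ψ.IsQF → ψ.Realize bb → ψ.Realize (gm ∘ bb) := by
    intro kk ψ bb hQF hreal
    have h1 : (diagSentence ψ bb).Realize M₀ :=
      hMD.realize_of_mem _ ⟨kk, ψ, bb, hQF, hreal, rfl⟩
    rw [realize_diagSentence] at h1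
    exact h1
  let g : N ↪[L] M₀ :=
    { toFun := gm
      inj' := by
        intro a a' h
        by_contra hne
        have h1 := hDreal (Formula.not (Term.equal (Term.var (0 : Fin 2)) (Term.var 1))) ![a, a']
          ((BoundedFormula.IsAtomic.equal _ _).isQF.not)
          (by
            simp only [Formula.realize_not, Formula.realize_equal, Term.realize_var,
              Matrix.cons_val_zero, Matrix.cons_val_one, Matrix.head_cons]
            exact hne)
        simp only [Formula.realize_not, Formula.realize_equal, Term.realize_var,
          Function.comp_apply, Matrix.cons_val_zero, Matrix.cons_val_one,
          Matrix.head_cons] at h1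
        exact h1 h
      map_fun' := by
        intro n F x
        have h1 := hDreal (Term.equal (Term.func F (fun i => Term.var i.castSucc))
            (Term.var (Fin.last n))) (Fin.snoc x (Structure.funMap F x))
          ((BoundedFormula.IsAtomic.equal _ _).isQF)
          (by
            simp only [Formula.realize_equal, Term.realize_func, Term.realize_var,
              Fin.snoc_castSucc, Fin.snoc_last])
        simp only [Formula.realize_equal, Term.realize_func, Term.realize_var,
          Function.comp_apply, Fin.snoc_castSucc, Fin.snoc_last] at h1
        exact h1.symm
      map_rel' := by
        intro n R x
        constructor
        · intro hgx
          by_contra hR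
          have h1 := hDreal ((R.formula Term.var).not) x
            ((BoundedFormula.IsAtomic.rel _ _).isQF.not)
            (by
              simp only [Formula.realize_not, Formula.realize_rel, Term.realize_var]
              exact hR)
          simp only [Formula.realize_not, Formula.realize_rel, Term.realize_var,
            Function.comp_apply] at h1
          exact h1 hgx
        · intro hR
          have h1 := hDreal (R.formula Term.var) x ((BoundedFormula.IsAtomic.rel _ _).isQF)
            (by
              simp only [Formula.realize_rel, Term.realize_var]
              exact hR)
          simp only [Formula.realize_rel, Term.realize_var, Function.comp_apply] at h1
          exact h1 }
  refine ⟨⟨M₀, inferInstance⟩, e, g, fun a => rfl⟩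

theorem main_induction (T : L.Theory)
    (H : ∀ (M N : Theory.ModelType.{u, v, max u v} T) (f : M ↪[L] N), IsSigma1Map f)
    {m n : ℕ} {ψ : L.BoundedFormula (Fin m) n} (hψ : ψ.IsPrenex) :
    ∀ (M N : Theory.ModelType.{u, v, max u v} T) (f : M ↪[L] N) (v : Fin m → M)
      (xs : Fin n → M),
      ψ.Realize ((f : M → N) ∘ v) ((f : M → N) ∘ xs) ↔ ψ.Realize v xs := by
  induction hψ with
  | of_isQF h =>
      intro M N f v xs
      exact h.realize_embedding f
  | @all k ψ h ih =>
      intro M N f v xs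
      rw [BoundedFormula.realize_all, BoundedFormula.realize_all]
      constructor
      · intro hN a
        have h1 := hN (f a)
        rw [← Fin.comp_snoc] at h1
        exact (ih M N f v _).1 h1
      · intro hM b
        obtain ⟨Q, e, g, hcomm⟩ := exists_extension f (H M N f)
        letI : L.Structure Q.α := Q.str
        haveI : Nonempty Q.α := Nonempty.map e inferInstance
        haveI : Q.α ⊨ T := (e.theory_model_iff T).1 inferInstance
        let Q' : Theory.ModelType.{u, v, max u v} T := Theory.ModelType.of T Q.α
        let e' : M ↪ₑ[L] (Q' : Type (max u v)) := e
        let g' : N ↪[L] (Q' : Type (max u v)) := g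
        have hcomm' : ∀ a : M, g' (f a) = e' a := fun a => hcomm a
        have hQ : ψ.Realize ((e' : M → Q') ∘ v)
            (Fin.snoc ((e' : M → Q') ∘ xs) (g' b)) := by
          have h2 := (e'.map_boundedFormula ψ.all v xs).2 hM
          rw [BoundedFormula.realize_all] at h2
          exact h2 (g' b)
        have h5 := ih N Q' g' ((f : M → N) ∘ v) (Fin.snoc ((f : M → N) ∘ xs) b)
        have h3 : (g' : N → Q') ∘ ((f : M → N) ∘ v) = (e' : M → Q') ∘ v :=
          funext fun i => hcomm' (v i)
        have h4 : (g' : N → Q') ∘ Fin.snoc ((f : M → N) ∘ xs) b =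
            Fin.snoc ((e' : M → Q') ∘ xs) (g' b) := by
          rw [Fin.comp_snoc]
          rw [show (g' : N → Q') ∘ ((f : M → N) ∘ xs) = (e' : M → Q') ∘ xs from
            funext fun i => hcomm' (xs i)]
        rw [h3, h4] at h5
        exact h5.1 hQ
  | @ex k ψ h ih =>
      intro M N f v xs
      rw [BoundedFormula.realize_ex, BoundedFormula.realize_ex]
      constructor
      · rintro ⟨b, hb⟩
        obtain ⟨Q, e, g, hcomm⟩ := exists_extension f (H M N f)
        letI : L.Structure Q.α := Q.str
        haveI : Nonempty Q.α := Nonempty.map e inferInstance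
        haveI : Q.α ⊨ T := (e.theory_model_iff T).1 inferInstance
        let Q' : Theory.ModelType.{u, v, max u v} T := Theory.ModelType.of T Q.α
        let e' : M ↪ₑ[L] (Q' : Type (max u v)) := e
        let g' : N ↪[L] (Q' : Type (max u v)) := g
        have hcomm' : ∀ a : M, g' (f a) = e' a := fun a => hcomm a
        have h5 := ih N Q' g' ((f : M → N) ∘ v) (Fin.snoc ((f : M → N) ∘ xs) b)
        have h3 : (g' : N → Q') ∘ ((f : M → N) ∘ v) = (e' : M → Q') ∘ v :=
          funext fun i => hcomm' (v i)
        have h4 : (g' : N → Q') ∘ Fin.snoc ((f : M → N) ∘ xs) b =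
            Fin.snoc ((e' : M → Q') ∘ xs) (g' b) := by
          rw [Fin.comp_snoc]
          rw [show (g' : N → Q') ∘ ((f : M → N) ∘ xs) = (e' : M → Q') ∘ xs from
            funext fun i => hcomm' (xs i)]
        rw [h3, h4] at h5
        have hQ : ψ.ex.Realize ((e' : M → Q') ∘ v) ((e' : M → Q') ∘ xs) := by
          rw [BoundedFormula.realize_ex]
          exact ⟨g' b, h5.2 hb⟩
        have h6 := (e'.map_boundedFormula ψ.ex v xs).1 hQ
        rw [BoundedFormula.realize_ex] at h6
        exact h6
      · rintro ⟨a, ha⟩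
        refine ⟨f a, ?_⟩
        rw [← Fin.comp_snoc]
        exact (ih M N f v _).2 ha


/-- Robinson's test: `T` is model complete iff every submodel of a model of `T`
which is itself a model of `T` is existentially closed in it. -/
theorem robinsons_test (T : L.Theory) :
    IsModelComplete T ↔
      ∀ (M N : Theory.ModelType.{u, v, max u v} T) (f : M ↪[L] N), IsSigma1Map f := by
  constructor
  · intro h M N f m n φ hQF v hexs
    exact (h M N f m φ.exs v).1 hexs
  · intro H M N f m φ v
    have h := main_induction T H φ.toPrenex_isPrenex M N f v (default : Fin 0 → M)
    rw [BoundedFormula.realize_toPrenex, BoundedFormula.realize_toPrenex] at h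
    have hd : ((f : M → N) ∘ (default : Fin 0 → M)) = default := Subsingleton.elim _ _
    rw [hd] at h
    exact h
end ModelCompanionship
end

section
/- (Lévy absoluteness) For every uncountable regular cardinal λ, H_λ is a Σ₁-elementary substructure of V for formulas with bounded (Δ₀) matrix: if φ(x̄) is a Δ₀ ∈-formula, a ∈ H_λ, and there exists x in V with φ(x, a), then there exists such x in H_λ. -/
universe u

open Cardinal

namespace ZFCCompanion

/-- Δ₀-formulas of the language of set theory: atomic formulas `v i ∈ v j` and
`v i = v j`, closed under negation, conjunction and the bounded quantifiers
`∀ x ∈ v i` and `∃ x ∈ v i` (the bound variable gets index `0`, the remaining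
variables are shifted by one). -/
inductive D0 : ℕ → Type
  | mem {n : ℕ} (i j : Fin n) : D0 n
  | eq {n : ℕ} (i j : Fin n) : D0 n
  | not {n : ℕ} : D0 n → D0 n
  | and {n : ℕ} : D0 n → D0 n → D0 n
  | ball {n : ℕ} (i : Fin n) : D0 (n + 1) → D0 n
  | bex {n : ℕ} (i : Fin n) : D0 (n + 1) → D0 n

/-- Realization of a Δ₀-formula in the universe of sets under a variable assignment. -/
def D0.Realize : {n : ℕ} → D0 n → (Fin n → ZFSet.{0}) → Prop
  | _, .mem i j, v => v i ∈ v j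
  | _, .eq i j, v => v i = v j
  | _, .not φ, v => ¬ φ.Realize v
  | _, .and φ ψ, v => φ.Realize v ∧ ψ.Realize v
  | _, .ball i φ, v => ∀ x : ZFSet, x ∈ v i → φ.Realize (Fin.cons x v)
  | _, .bex i φ, v => ∃ x : ZFSet, x ∈ v i ∧ φ.Realize (Fin.cons x v)

/-- The (class-sized) transitive closure of a set: everything reachable from `x` by a
finite descending ∈-chain. -/
def trcl (x : ZFSet.{0}) : Set ZFSet.{0} :=
  {y | Relation.TransGen (· ∈ ·) y x}

/-- `H λ`: the class of sets whose transitive closure has cardinality `< λ`. -/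
def Hcal (lam : Cardinal.{1}) : Set ZFSet.{0} :=
  {x | Cardinal.mk ↥(trcl x) < lam}

/-- `H κ⁺` presented directly: sets whose transitive closure has cardinality at
most that of `κ`. -/
def Hplus (κ : ZFSet.{0}) : Set ZFSet.{0} :=
  {x | Cardinal.mk ↥(trcl x) ≤ Cardinal.mk ↥κ.toSet}

/-- `f` is a (set-theoretic, Kuratowski-coded) function: a set of ordered pairs which
is single-valued. -/
def zfIsFunction (f : ZFSet.{0}) : Prop :=
  (∀ p ∈ f, ∃ a b : ZFSet, p = ZFSet.pair a b) ∧
    ∀ a b b' : ZFSet, ZFSet.pair a b ∈ f → ZFSet.pair a b' ∈ f → b = b'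

/-- The domain of a set-coded function. -/
def zfDom (f : ZFSet.{0}) : ZFSet.{0} :=
  ZFSet.sep (fun a => ∃ b, ZFSet.pair a b ∈ f) (ZFSet.sUnion (ZFSet.sUnion f))

/-- The range of a set-coded function. -/
def zfRan (f : ZFSet.{0}) : ZFSet.{0} :=
  ZFSet.sep (fun b => ∃ a, ZFSet.pair a b ∈ f) (ZFSet.sUnion (ZFSet.sUnion f))

/-- `x` is a (von Neumann) ordinal: a transitive set all of whose elements are
transitive. -/
def zfIsOrdinal (x : ZFSet.{0}) : Prop :=
  x.IsTransitive ∧ ∀ y ∈ x, ZFSet.IsTransitive y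

/-- `x` is a cardinal: an ordinal not equinumerous with any of its elements. -/
def zfIsCardinal (x : ZFSet.{0}) : Prop :=
  zfIsOrdinal x ∧ ∀ y ∈ x, Cardinal.mk ↥y.toSet < Cardinal.mk ↥x.toSet


/-! ### Auxiliary machinery for the proof of Lévy absoluteness -/

open FirstOrder FirstOrder.Language

attribute [local instance] Classical.propDecidable

section Collapse

/-- The Mostowski collapse relative to a class `M`. -/
noncomputable def clps (M : Set ZFSet.{0}) : ZFSet.{0} → ZFSet.{0} :=
  WellFounded.fix ZFSet.mem_wf fun y ih =>
    @ZFSet.image (fun z => if h : z ∈ y then ih z h else ∅)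
      (Classical.allZFSetDefinable _) (ZFSet.sep (· ∈ M) y)

theorem mem_clps {M : Set ZFSet.{0}} {y z : ZFSet.{0}} :
    z ∈ clps M y ↔ ∃ w, w ∈ y ∧ w ∈ M ∧ clps M w = z := by
  conv_lhs => rw [clps, WellFounded.fix_eq]
  rw [@ZFSet.mem_image _ (Classical.allZFSetDefinable _)]
  constructor
  · rintro ⟨w, hw, rfl⟩
    rw [ZFSet.mem_sep] at hw
    exact ⟨w, hw.1, hw.2, by rw [dif_pos hw.1]; rfl⟩
  · rintro ⟨w, hw1, hw2, rfl⟩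
    exact ⟨w, ZFSet.mem_sep.2 ⟨hw1, hw2⟩, by rw [dif_pos hw1]; rfl⟩

theorem mem_trcl {x y : ZFSet.{0}} (h : y ∈ x) : y ∈ trcl x := Relation.TransGen.single h

theorem trcl_subset {x y : ZFSet.{0}} (h : y ∈ x) : trcl y ⊆ trcl x :=
  fun _ hz => Relation.TransGen.tail hz h

/-- A class is extensional if distinct members are distinguished by a member of the class. -/
def Ext (M : Set ZFSet.{0}) : Prop :=
  ∀ y ∈ M, ∀ z ∈ M, y ≠ z → ∃ w ∈ M, ¬(w ∈ y ↔ w ∈ z)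

theorem clps_inj {M : Set ZFSet.{0}} (hM : Ext M) :
    ∀ y, y ∈ M → ∀ z ∈ M, clps M y = clps M z → y = z := by
  intro y
  induction y using ZFSet.inductionOn with
  | _ y IH =>
    intro _hy z hz he
    by_contra hne
    obtain ⟨w, hwM, hw⟩ := hM y _hy z hz hne
    by_cases h1 : w ∈ y
    · have h2 : w ∉ z := fun h => hw ⟨fun _ => h, fun _ => h1⟩
      have : clps M w ∈ clps M z := he ▸ mem_clps.2 ⟨w, h1, hwM, rfl⟩
      obtain ⟨u, huz, huM, hu⟩ := mem_clps.1 this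
      exact h2 (IH w h1 hwM u huM hu.symm ▸ huz)
    · have h2 : w ∈ z := by
        by_contra h2
        exact hw ⟨fun h => absurd h h1, fun h => absurd h h2⟩
      have : clps M w ∈ clps M y := he ▸ mem_clps.2 ⟨w, h2, hwM, rfl⟩
      obtain ⟨u, huy, huM, hu⟩ := mem_clps.1 this
      exact h1 ((IH u huy huM w hwM hu) ▸ huy)

theorem clps_mem_iff {M : Set ZFSet.{0}} (hM : Ext M) {y z : ZFSet.{0}}
    (hy : y ∈ M) (hz : z ∈ M) : clps M z ∈ clps M y ↔ z ∈ y := by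
  constructor
  · intro h
    obtain ⟨w, hwy, hwM, hw⟩ := mem_clps.1 h
    exact (clps_inj hM w hwM z hz hw) ▸ hwy
  · intro h
    exact mem_clps.2 ⟨z, h, hz, rfl⟩

theorem clps_fix {M : Set ZFSet.{0}} : ∀ y : ZFSet.{0}, trcl y ⊆ M → clps M y = y := by
  intro y
  induction y using ZFSet.inductionOn with
  | _ y IH =>
    intro hsub
    ext z
    rw [mem_clps]
    constructor
    · rintro ⟨w, hwy, _, rfl⟩
      rw [IH w hwy ((trcl_subset hwy).trans hsub)]
      exact hwy
    · intro hzy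
      exact ⟨z, hzy, hsub (mem_trcl hzy), IH z hzy ((trcl_subset hzy).trans hsub)⟩

theorem trcl_clps_subset {M : Set ZFSet.{0}} {x : ZFSet.{0}} (hx : x ∈ M) :
    trcl (clps M x) ⊆ clps M '' M := by
  have step : ∀ b ∈ clps M '' M, ∀ z ∈ b, z ∈ clps M '' M := by
    rintro b ⟨w, hwM, rfl⟩ z hz
    obtain ⟨u, _, huM, hu⟩ := mem_clps.1 hz
    exact ⟨u, huM, hu⟩
  intro z hz
  induction hz using Relation.TransGen.head_induction_on with
  | single h => exact step _ ⟨x, hx, rfl⟩ _ h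
  | head h _ ih => exact step _ ih _ h

end Collapse

section Generic

/-- Generic realization of a `D0` formula over any type with a binary relation. -/
def D0.RealizeG {N : Type*} (r : N → N → Prop) : {n : ℕ} → D0 n → (Fin n → N) → Prop
  | _, .mem i j, v => r (v i) (v j)
  | _, .eq i j, v => v i = v j
  | _, .not φ, v => ¬ φ.RealizeG r v
  | _, .and φ ψ, v => φ.RealizeG r v ∧ ψ.RealizeG r v
  | _, .ball i φ, v => ∀ x : N, r x (v i) → φ.RealizeG r (Fin.cons x v)
  | _, .bex i φ, v => ∃ x : N, r x (v i) ∧ φ.RealizeG r (Fin.cons x v)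

theorem D0.realizeG_mem {n : ℕ} (φ : D0 n) : ∀ (v : Fin n → ZFSet.{0}),
    φ.RealizeG (· ∈ ·) v ↔ φ.Realize v := by
  induction φ <;> intro v <;>
    simp only [D0.Realize, D0.RealizeG, *]

theorem D0.realizeG_congr {N : Type*} {r r' : N → N → Prop}
    (h : ∀ a b, r a b ↔ r' a b) :
    ∀ {n : ℕ} (φ : D0 n) (v : Fin n → N), φ.RealizeG r v ↔ φ.RealizeG r' v := by
  intro n φ
  induction φ <;> intro v <;>
    simp only [D0.RealizeG, *]

/-- Invariance of generic realization under relation-isomorphisms onto a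
"downward closed" image. -/
theorem D0.realizeG_map {N N' : Type*} {r : N → N → Prop} {r' : N' → N' → Prop}
    (f : N → N') (hinj : Function.Injective f)
    (hr : ∀ x y, r x y ↔ r' (f x) (f y))
    (hsur : ∀ (b : N) (x' : N'), r' x' (f b) → ∃ x, f x = x') :
    ∀ {n : ℕ} (φ : D0 n) (v : Fin n → N),
      φ.RealizeG r v ↔ φ.RealizeG r' (f ∘ v) := by
  intro n φ
  induction φ with
  | mem i j => intro v; exact hr _ _
  | eq i j => intro v; exact ⟨fun h => congrArg f h, fun h => hinj h⟩
  | not φ ih => intro v; exact (ih v).not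
  | and φ ψ ih1 ih2 => intro v; exact and_congr (ih1 v) (ih2 v)
  | ball i φ ih =>
    intro v
    constructor
    · intro h x' hx'
      obtain ⟨x, rfl⟩ := hsur (v i) x' hx'
      have := h x ((hr _ _).2 hx')
      rw [ih] at this
      rwa [Fin.comp_cons] at this
    · intro h x hx
      have := h (f x) ((hr _ _).1 hx)
      rw [ih, Fin.comp_cons]
      exact this
  | bex i φ ih =>
    intro v
    constructor
    · rintro ⟨x, hx, hφ⟩
      refine ⟨f x, (hr _ _).1 hx, ?_⟩
      rw [← Fin.comp_cons, ← ih]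
      exact hφ
    · rintro ⟨x', hx', hφ⟩
      obtain ⟨x, rfl⟩ := hsur (v i) x' hx'
      refine ⟨x, (hr _ _).2 hx', ?_⟩
      rw [ih, Fin.comp_cons]
      exact hφ

end Generic

section FO

/-- ZFSet as a structure in the language of a single binary relation. -/
instance zfStructure : Language.graph.Structure ZFSet.{0} where
  RelMap | .adj => fun x => x 0 ∈ x 1

@[simp] theorem relMap_adj {x : Fin 2 → ZFSet.{0}} :
    Structure.RelMap (L := Language.graph) FirstOrder.Language.adj x ↔ x 0 ∈ x 1 := Iff.rfl

theorem snoc_comp_rev {N : Type*} {m : ℕ} (w : Fin m → N) (x : N) :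
    (Fin.snoc w x) ∘ Fin.rev = Fin.cons x (w ∘ Fin.rev) := by
  funext k
  induction k using Fin.cases with
  | zero => simp [Fin.rev_zero]
  | succ j => simp [Fin.rev_succ]

theorem comp_rev_rev {N : Type*} {m : ℕ} (u : Fin m → N) : (u ∘ Fin.rev) ∘ Fin.rev = u :=
  funext fun k => by simp [Function.comp, Fin.rev_rev]

/-- Translation of `D0` formulas into first-order formulas in the language of one
binary relation, with variable order reversed. -/
def D0.trans : {m : ℕ} → D0 m → Language.graph.BoundedFormula Empty m
  | _, .mem i j => Relations.boundedFormula₂ FirstOrder.Language.adj (&i.rev) &j.rev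
  | _, .eq i j => Term.bdEqual (&i.rev) &j.rev
  | _, .not φ => φ.trans.not
  | _, .and φ ψ => φ.trans ⊓ ψ.trans
  | _, .ball i φ =>
      ((Relations.boundedFormula₂ FirstOrder.Language.adj (&(Fin.last _))
        &(i.rev.castSucc)).imp φ.trans).all
  | _, .bex i φ =>
      ((Relations.boundedFormula₂ FirstOrder.Language.adj (&(Fin.last _))
        &(i.rev.castSucc)) ⊓ φ.trans).ex

theorem D0.realize_trans {N : Type*} [Language.graph.Structure N] :
    ∀ {m : ℕ} (φ : D0 m) (w : Fin m → N),
      φ.trans.Realize (fun e => e.elim) w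
        ↔ φ.RealizeG (fun a b => Structure.RelMap FirstOrder.Language.adj ![a, b])
            (w ∘ Fin.rev) := by
  intro m φ
  induction φ with
  | mem i j =>
    intro w
    simp [D0.trans, D0.RealizeG, Function.comp]
  | eq i j =>
    intro w
    simp [D0.trans, D0.RealizeG, Function.comp, BoundedFormula.realize_bdEqual]
  | not φ ih =>
    intro w
    simp [D0.trans, D0.RealizeG, ih]
  | and φ ψ ih1 ih2 =>
    intro w
    simp [D0.trans, D0.RealizeG, ih1, ih2]
  | ball i φ ih =>
    intro w
    simp [D0.trans, D0.RealizeG, BoundedFormula.realize_rel₂, Term.realize,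
      Fin.snoc_last, Fin.snoc_castSucc, ih, snoc_comp_rev, Function.comp]
  | bex i φ =>
    intro w
    rename_i ih
    simp [D0.trans, D0.RealizeG, BoundedFormula.realize_rel₂, Term.realize,
      Fin.snoc_last, Fin.snoc_castSucc, ih, snoc_comp_rev, Function.comp]

/-- The elementarity bridge. -/
theorem D0.realizeG_sub (S : Language.graph.ElementarySubstructure ZFSet.{0})
    {m : ℕ} (φ : D0 m) (v : Fin m → ↥S) :
    φ.RealizeG (fun a b : ↥S => (a : ZFSet) ∈ (b : ZFSet)) v ↔
      φ.RealizeG (· ∈ ·) (fun i => (v i : ZFSet)) := by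
  set F : Language.graph.Formula (Fin m) :=
    (φ.trans.toFormula).relabel (Sum.elim Empty.elim id) with hFdef
  have hF : ∀ (N : Type 1) (inst : Language.graph.Structure N) (u : Fin m → N),
      F.Realize u ↔
        φ.RealizeG (fun a b => Structure.RelMap FirstOrder.Language.adj ![a, b])
          (u ∘ Fin.rev) := by
    intro N inst u
    rw [hFdef, Formula.realize_relabel, BoundedFormula.realize_toFormula]
    rw [show ((u ∘ Sum.elim Empty.elim id) ∘ Sum.inl) = (fun e : Empty => e.elim) from
      funext fun e => e.elim]
    exact D0.realize_trans φ u
  have h1 := hF ZFSet inferInstance ((fun i => (v i : ZFSet)) ∘ Fin.rev)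
  have h2 := hF ↥S inferInstance (v ∘ Fin.rev)
  rw [comp_rev_rev] at h1 h2
  have he := S.isElementary F (v ∘ Fin.rev)
  have e1 : φ.RealizeG (fun a b : ↥S => (a : ZFSet) ∈ (b : ZFSet)) v ↔
      φ.RealizeG (fun a b : ↥S => Structure.RelMap FirstOrder.Language.adj ![a, b]) v :=
    D0.realizeG_congr (fun a b => Iff.rfl) φ v
  have e2 : φ.RealizeG (· ∈ ·) (fun i => (v i : ZFSet)) ↔
      φ.RealizeG (fun a b : ZFSet => Structure.RelMap FirstOrder.Language.adj ![a, b])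
        (fun i => (v i : ZFSet)) :=
    D0.realizeG_congr (fun a b => Iff.rfl) φ _
  rw [e1, e2, ← h1, ← h2]
  exact he.symm

/-- The first-order formula expressing that two sets are distinguished by a member. -/
def extFml : Language.graph.Formula (Fin 2) :=
  ((((FirstOrder.Language.adj).boundedFormula₂ &0 (Term.var (Sum.inl 0))).iff
    ((FirstOrder.Language.adj).boundedFormula₂ &0 (Term.var (Sum.inl 1)))).not).ex

theorem snoc_default_zero {α : Type*} (a : α) :
    (Fin.snoc (default : Fin 0 → α) a : Fin 1 → α) 0 = a := by
  simp [Fin.snoc]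

theorem realize_extFml_zf (u : Fin 2 → ZFSet.{0}) :
    extFml.Realize u ↔ ∃ w : ZFSet, ¬(w ∈ u 0 ↔ w ∈ u 1) := by
  simp [extFml, Formula.Realize, Term.realize, snoc_default_zero]

theorem ext_of_elementary (S : Language.graph.ElementarySubstructure ZFSet.{0})
    (y z : ↥S) (hne : (y : ZFSet) ≠ (z : ZFSet)) :
    ∃ w : ↥S, ¬((w : ZFSet) ∈ (y : ZFSet) ↔ (w : ZFSet) ∈ (z : ZFSet)) := by
  have hV : extFml.Realize (fun i => (![y, z] i : ZFSet)) := by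
    rw [realize_extFml_zf]
    show ∃ w : ZFSet, ¬(w ∈ (y : ZFSet) ↔ w ∈ (z : ZFSet))
    by_contra h
    push_neg at h
    exact hne (ZFSet.ext fun w => h w)
  have he := S.isElementary extFml ![y, z]
  have hV' : extFml.Realize (((↑) : ↥S → ZFSet) ∘ ![y, z]) := hV
  have hS := he.1 hV'
  simp only [extFml, Formula.Realize, BoundedFormula.realize_ex, BoundedFormula.realize_not,
    BoundedFormula.realize_iff, BoundedFormula.realize_rel₂, Term.realize, Sum.elim_inl,
    Sum.elim_inr, snoc_default_zero] at hS
  obtain ⟨a, h⟩ := hS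
  exact ⟨a, h⟩

end FO

section Card

/-- Nested singletons give an injection of `ℕ` into `ZFSet`. -/
def natZF : ℕ → ZFSet.{0}
  | 0 => ∅
  | n + 1 => {natZF n}

theorem natZF_inj : Function.Injective natZF := by
  intro m
  induction m with
  | zero =>
    intro k h
    cases k with
    | zero => rfl
    | succ k =>
      exfalso
      have : natZF k ∈ natZF (k + 1) := ZFSet.mem_singleton.2 rfl
      rw [← h] at this
      exact ZFSet.notMem_empty _ this
  | succ m ih =>
    intro k h
    cases k with
    | zero =>
      exfalso
      have : natZF m ∈ natZF (m + 1) := ZFSet.mem_singleton.2 rfl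
      rw [h] at this
      exact ZFSet.notMem_empty _ this
    | succ k =>
      have : natZF m ∈ natZF (k + 1) := by
        rw [← h]; exact ZFSet.mem_singleton.2 rfl
      rw [ih (ZFSet.mem_singleton.1 this)]

theorem aleph0_le_mk_zfset : Cardinal.aleph0 ≤ Cardinal.mk ZFSet.{0} :=
  Cardinal.aleph0_le_mk_iff.2 (Infinite.of_injective natZF natZF_inj)

end Card

/-- Lévy absoluteness: for `λ` an uncountable regular cardinal, `H_λ` is a
Σ₁-elementary substructure of `V` for formulas with Δ₀ matrix: if `φ` is Δ₀,
the parameters `a` lie in `H_λ`, and some set `x` satisfies `φ(x, a)`, then some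
`x ∈ H_λ` satisfies `φ(x, a)`. -/
theorem levy_absoluteness (lam : Cardinal.{1}) (hreg : lam.IsRegular)
    (hunc : Cardinal.aleph0 < lam)
    {n : ℕ} (φ : D0 (n + 1)) (a : Fin n → ZFSet.{0}) (ha : ∀ i, a i ∈ Hcal lam)
    (hex : ∃ x : ZFSet, φ.Realize (Fin.cons x a)) :
    ∃ x ∈ Hcal lam, φ.Realize (Fin.cons x a) := by
  classical
  obtain ⟨x₀, hx₀⟩ := hex
  have hlam0 : Cardinal.aleph0 ≤ lam := hunc.le
  set s : Set ZFSet.{0} := insert x₀ (Set.range a ∪ ⋃ i, trcl (a i)) with hsdef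
  -- cardinality of the parameter set
  have hUnion : Cardinal.mk ↥(⋃ i, trcl (a i)) < lam := by
    have h5 := Cardinal.mk_iUnion_le_sum_mk_lift (ι := Fin n) (f := fun i => trcl (a i))
    rw [Cardinal.lift_uzero] at h5
    refine lt_of_le_of_lt h5 ?_
    refine Cardinal.sum_lt_lift_of_isRegular hreg ?_ ?_
    · rw [Cardinal.mk_fin, Cardinal.lift_natCast]
      exact (Cardinal.nat_lt_aleph0 n).trans hunc
    · intro i
      exact ha i
  have hslt : Cardinal.mk ↥s < lam := by
    refine lt_of_le_of_lt Cardinal.mk_insert_le ?_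
    refine Cardinal.add_lt_of_lt hlam0 ?_ (lt_of_lt_of_le Cardinal.one_lt_aleph0 hlam0)
    refine lt_of_le_of_lt (Cardinal.mk_union_le _ _) ?_
    refine Cardinal.add_lt_of_lt hlam0 ?_ hUnion
    have : (Set.range a).Finite := Set.finite_range a
    exact lt_of_lt_of_le this.lt_aleph0 hlam0
  set κ : Cardinal.{1} := max Cardinal.aleph0 (Cardinal.mk ↥s) with hκdef
  have hκ1 : Cardinal.aleph0 ≤ κ := le_max_left _ _
  have hκlam : κ < lam := max_lt hunc hslt
  have hκZF : κ ≤ Cardinal.mk ZFSet.{0} := max_le aleph0_le_mk_zfset (Cardinal.mk_set_le s)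
  -- Downward Löwenheim–Skolem
  obtain ⟨S, hsub, hScard⟩ :=
    FirstOrder.Language.exists_elementarySubstructure_card_eq Language.graph (M := ZFSet.{0})
      s κ hκ1 (Cardinal.lift_le.2 (le_max_right _ _))
      (by
        have hc : Language.graph.card ≤ Cardinal.aleph0 := Cardinal.mk_le_aleph0
        calc Cardinal.lift.{1} Language.graph.card ≤ Cardinal.lift.{1} Cardinal.aleph0 :=
              Cardinal.lift_le.2 hc
          _ = Cardinal.aleph0 := Cardinal.lift_aleph0
          _ ≤ κ := hκ1
          _ = Cardinal.lift.{0} κ := (Cardinal.lift_uzero κ).symm)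
      (Cardinal.lift_le.2 hκZF)
  have hScard' : Cardinal.mk ↥S = κ := Cardinal.lift_inj.1 hScard
  set Sset : Set ZFSet.{0} := (S : Set ZFSet.{0}) with hSsetdef
  have hx₀S : x₀ ∈ Sset := hsub (Set.mem_insert _ _)
  have haS : ∀ i, a i ∈ Sset := fun i =>
    hsub (Set.mem_insert_of_mem _ (Set.mem_union_left _ (Set.mem_range_self i)))
  have htr : ∀ i, trcl (a i) ⊆ Sset := fun i z hz =>
    hsub (Set.mem_insert_of_mem _ (Set.mem_union_right _ (Set.mem_iUnion.2 ⟨i, hz⟩)))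
  have hExt : Ext Sset := by
    intro y hy z hz hne
    obtain ⟨w, hw⟩ := ext_of_elementary S ⟨y, hy⟩ ⟨z, hz⟩ hne
    exact ⟨(w : ZFSet), w.2, hw⟩
  set c : ZFSet.{0} → ZFSet.{0} := clps Sset with hcdef
  have hca : ∀ i, c (a i) = a i := fun i => clps_fix _ (htr i)
  -- transfer along the collapse
  set f : ↥S → ZFSet.{0} := fun u => c (u : ZFSet) with hfdef
  have hinj : Function.Injective f := by
    intro u w h
    exact Subtype.ext (clps_inj hExt _ u.2 _ w.2 h)
  have hr : ∀ u w : ↥S, ((u : ZFSet) ∈ (w : ZFSet)) ↔ f u ∈ f w := fun u w =>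
    (clps_mem_iff hExt w.2 u.2).symm
  have hsur : ∀ (b : ↥S) (x' : ZFSet), x' ∈ f b → ∃ u : ↥S, f u = x' := by
    intro b x' h
    obtain ⟨w, hwb, hwM, hw⟩ := mem_clps.1 h
    exact ⟨⟨w, hwM⟩, hw⟩
  set v' : Fin (n + 1) → ↥S := Fin.cons ⟨x₀, hx₀S⟩ (fun i => ⟨a i, haS i⟩) with hv'def
  have hcoe : (fun i => (v' i : ZFSet)) = Fin.cons x₀ a := by
    funext k
    induction k using Fin.cases with
    | zero => rfl
    | succ j => rfl
  have h1 : φ.RealizeG (· ∈ ·) (Fin.cons x₀ a) := (D0.realizeG_mem φ _).2 hx₀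
  have h2 : φ.RealizeG (fun u w : ↥S => (u : ZFSet) ∈ (w : ZFSet)) v' := by
    rw [D0.realizeG_sub S φ v', hcoe]
    exact h1
  have h3 : φ.RealizeG (· ∈ ·) (f ∘ v') :=
    (D0.realizeG_map f hinj hr hsur φ v').1 h2
  have hfv : f ∘ v' = Fin.cons (c x₀) a := by
    funext k
    induction k using Fin.cases with
    | zero => rfl
    | succ j => exact hca j
  rw [hfv] at h3
  have h4 : φ.Realize (Fin.cons (c x₀) a) := (D0.realizeG_mem φ _).1 h3
  -- the collapsed witness lies in `H lam`
  refine ⟨c x₀, ?_, h4⟩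
  have hsubtr : trcl (c x₀) ⊆ c '' Sset := trcl_clps_subset hx₀S
  have hle1 : Cardinal.mk ↥(trcl (c x₀)) ≤ Cardinal.mk ↥(c '' Sset) :=
    Cardinal.mk_le_mk_of_subset hsubtr
  have hle2 : Cardinal.mk ↥(c '' Sset) ≤ Cardinal.mk ↥Sset := Cardinal.mk_image_le
  have hle3 : Cardinal.mk ↥Sset = Cardinal.mk ↥S :=
    Cardinal.mk_congr (Equiv.subtypeEquivRight fun x => Iff.rfl)
  show Cardinal.mk ↥(trcl (c x₀)) < lam
  calc Cardinal.mk ↥(trcl (c x₀)) ≤ Cardinal.mk ↥Sset := hle1.trans hle2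
    _ = κ := by rw [hle3, hScard']
    _ < lam := hκlam

end ZFCCompanion
end

section
/- An ordinal x equals ℵ₁ if and only if x is an uncountable cardinal and there exists a function F : ω × x → x such that for every α ∈ x, the restriction of F to ω × {α} is a surjection onto α; hence 'x is ℵ₁' is a boolean combination of Σ₁ conditions over Δ₀ predicates. -/
universe u

open Cardinal

namespace ZFCCompanion

/-! ### Auxiliary material -/

/-- The `n`-th von Neumann natural number as a `ZFSet`. -/
private def VN : ℕ → ZFSet.{0}
  | 0 => ∅
  | n + 1 => insert (VN n) (VN n)

private lemma VN_mem_omega (n : ℕ) : VN n ∈ ZFSet.omega := by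
  induction n with
  | zero => exact ZFSet.omega_zero
  | succ n ih => exact ZFSet.omega_succ ih

private lemma mk_ofNat (n : ℕ) : ZFSet.mk (PSet.ofNat n) = VN n := by
  induction n with
  | zero => rfl
  | succ n ih =>
    show ZFSet.mk (insert (PSet.ofNat n) (PSet.ofNat n)) = insert (VN n) (VN n)
    rw [← ih]
    rfl

private lemma mem_omega_iff {a : ZFSet.{0}} : a ∈ ZFSet.omega ↔ ∃ n : ℕ, a = VN n := by
  constructor
  · intro h
    induction a using Quotient.inductionOn with
    | _ a =>
      obtain ⟨⟨n⟩, e⟩ := h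
      exact ⟨n, by rw [← mk_ofNat]; exact ZFSet.sound e⟩
  · rintro ⟨n, rfl⟩
    exact VN_mem_omega n

private lemma VN_mem {m n : ℕ} (h : m < n) : VN m ∈ VN n := by
  induction n with
  | zero => exact absurd h (Nat.not_lt_zero m)
  | succ n ih =>
    rcases Nat.lt_succ_iff_lt_or_eq.1 h with h' | rfl
    · exact ZFSet.mem_insert_of_mem _ (ih h')
    · exact ZFSet.mem_insert _ _

private lemma VN_inj : Function.Injective VN := by
  intro m n h
  by_contra hne
  rcases Nat.lt_or_ge m n with hlt | hge
  · exact ZFSet.mem_irrefl _ (h ▸ VN_mem hlt)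
  · have hlt : n < m := lt_of_le_of_ne hge (Ne.symm hne)
    exact ZFSet.mem_irrefl _ (h ▸ VN_mem hlt)

private lemma mem_zfDom {f a : ZFSet.{0}} : a ∈ zfDom f ↔ ∃ b, ZFSet.pair a b ∈ f := by
  unfold zfDom
  rw [ZFSet.mem_sep]
  refine ⟨And.right, ?_⟩
  rintro ⟨b, hb⟩
  refine ⟨?_, ⟨b, hb⟩⟩
  refine ZFSet.mem_sUnion.2 ⟨{a}, ?_, ZFSet.mem_singleton.2 rfl⟩
  refine ZFSet.mem_sUnion.2 ⟨ZFSet.pair a b, hb, ?_⟩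
  exact ZFSet.mem_insert _ _

private lemma mem_zfRan {f b : ZFSet.{0}} : b ∈ zfRan f ↔ ∃ a, ZFSet.pair a b ∈ f := by
  unfold zfRan
  rw [ZFSet.mem_sep]
  refine ⟨And.right, ?_⟩
  rintro ⟨a, ha⟩
  refine ⟨?_, ⟨a, ha⟩⟩
  refine ZFSet.mem_sUnion.2 ⟨{a, b}, ?_, ?_⟩
  · exact ZFSet.mem_sUnion.2 ⟨ZFSet.pair a b, ha,
      ZFSet.mem_insert_of_mem _ (ZFSet.mem_singleton.2 rfl)⟩
  · exact ZFSet.mem_insert_of_mem _ (ZFSet.mem_insert _ _)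

private lemma ord_of_mem {x y : ZFSet.{0}} (hx : zfIsOrdinal x) (hy : y ∈ x) :
    zfIsOrdinal y :=
  ⟨hx.2 y hy, fun z hz => hx.2 z (hx.1 y hy hz)⟩

private lemma ord_tri (a : ZFSet.{0}) : ∀ b : ZFSet.{0}, zfIsOrdinal a → zfIsOrdinal b →
    a ∈ b ∨ a = b ∨ b ∈ a := by
  induction a using ZFSet.inductionOn with
  | _ a IHa =>
    intro b
    induction b using ZFSet.inductionOn with
    | _ b IHb =>
      intro ha hb
      by_cases hab : a ∈ b
      · exact Or.inl hab
      by_cases hba : b ∈ a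
      · exact Or.inr (Or.inr hba)
      refine Or.inr (Or.inl (ZFSet.ext fun z => ⟨fun hz => ?_, fun hz => ?_⟩))
      · rcases IHa z hz b (ord_of_mem ha hz) hb with h | h | h
        · exact h
        · exact absurd (h ▸ hz) hba
        · exact absurd (ha.1 z hz h) hba
      · rcases IHb z hz ha (ord_of_mem hb hz) with h | h | h
        · exact absurd (hb.1 z hz h) hab
        · exact absurd (h ▸ hz) hab
        · exact h

private lemma card_le_aleph_one {x : ZFSet.{0}} (hx : zfIsOrdinal x)
    (h : ∀ α ∈ x, (α.toSet).Countable) : Cardinal.mk ↥x.toSet ≤ Cardinal.aleph 1 := by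
  let r : ↥x.toSet → ↥x.toSet → Prop := fun a b => a.1 ∈ b.1
  haveI : IsTrichotomous ↥x.toSet r := ⟨fun a b => by
    rcases ord_tri a.1 b.1 (ord_of_mem hx a.2) (ord_of_mem hx b.2) with h' | h' | h'
    · exact fun h1 _ => absurd h' h1
    · exact fun _ _ => Subtype.ext h'
    · exact fun _ h2 => absurd h' h2⟩
  haveI : IsTrans ↥x.toSet r := ⟨fun a b c hab hbc => (hx.2 c.1 c.2) b.1 hbc hab⟩
  haveI : IsWellFounded ↥x.toSet r := ⟨InvImage.wf (fun a : ↥x.toSet => a.1) ZFSet.mem_wf⟩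
  haveI : IsWellOrder ↥x.toSet r := { }
  have hle : Ordinal.type r ≤ (Cardinal.aleph 1).ord := by
    by_contra hlt
    push_neg at hlt
    obtain ⟨a, ha⟩ := Ordinal.typein_surj r hlt
    have h1 : Cardinal.aleph 1 = Cardinal.mk {b // r b a} := by
      have hct := Ordinal.card_typein (r := r) a
      rw [ha, Cardinal.card_ord] at hct
      exact hct
    have h2 : Cardinal.mk {b // r b a} ≤ Cardinal.mk ↥(a.1.toSet) := by
      refine Cardinal.mk_le_of_injective
        (f := fun b : {b // r b a} => (⟨b.1.1, b.2⟩ : ↥(a.1.toSet))) ?_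
      intro b c hbc
      have h5 := Subtype.mk_eq_mk.mp hbc
      exact Subtype.ext (Subtype.ext h5)
    have h3 : Cardinal.mk ↥(a.1.toSet) ≤ Cardinal.aleph0 :=
      Cardinal.le_aleph0_iff_set_countable.2 (h a.1 a.2)
    have h4 : Cardinal.aleph 1 ≤ Cardinal.aleph0 := h1 ▸ h2.trans h3
    exact absurd h4 (not_le.2 Cardinal.aleph0_lt_aleph_one)
  calc Cardinal.mk ↥x.toSet = (Ordinal.type r).card := (Ordinal.card_type r).symm
    _ ≤ ((Cardinal.aleph 1).ord).card := Ordinal.card_le_card hle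
    _ = Cardinal.aleph 1 := Cardinal.card_ord _

/-- An ordinal `x` equals `ℵ₁` iff `x` is an uncountable cardinal and there is a
function `F : ω × x → x` such that for every `α ∈ x` the restriction of `F` to
`ω × {α}` is a surjection onto `α`. -/
theorem is_aleph_one_iff (x : ZFSet.{0}) (hx : zfIsOrdinal x) :
    (zfIsCardinal x ∧ Cardinal.mk ↥x.toSet = Cardinal.aleph 1) ↔
      ((zfIsCardinal x ∧ Cardinal.aleph0 < Cardinal.mk ↥x.toSet) ∧
        ∃ F : ZFSet, zfIsFunction F ∧ zfDom F = ZFSet.prod ZFSet.omega x ∧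
          zfRan F ⊆ x ∧
          ∀ α ∈ x, ∀ β ∈ α, ∃ n ∈ ZFSet.omega,
            ZFSet.pair (ZFSet.pair n α) β ∈ F) := by
  classical
  constructor
  · rintro ⟨hcard, hone⟩
    have hcount : ∀ α ∈ x, (α.toSet).Countable := by
      intro α hα
      have h1 := hcard.2 α hα
      rw [hone] at h1
      exact (Cardinal.countable_iff_lt_aleph_one _).2 h1
    -- `x` is nonempty
    have hne : Nonempty ↥x.toSet := by
      refine Cardinal.mk_ne_zero_iff.1 ?_
      rw [hone]
      exact (Cardinal.aleph0_lt_aleph_one.trans_le' (by positivity)).ne'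
    obtain ⟨⟨z, hz⟩⟩ := hne
    -- `∅ ∈ x`
    have hempty : (∅ : ZFSet) ∈ x := by
      obtain ⟨y, hyx, hy⟩ := ZFSet.regularity x
        (by rintro rfl; exact ZFSet.notMem_empty z hz)
      have hy0 : y = ∅ := by
        rw [ZFSet.eq_empty]
        intro w hw
        have hwx : w ∈ x := hx.1 y hyx hw
        have hmem : w ∈ x ∩ y := ZFSet.mem_inter.2 ⟨hwx, hw⟩
        rw [hy] at hmem
        exact ZFSet.notMem_empty w hmem
      rwa [hy0] at hyx
    -- choose enumerations of the elements of `x`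
    have hgex : ∀ α : ZFSet.{0}, ∃ g : ℕ → ZFSet.{0},
        (∀ n, g n ∈ x) ∧ (α ∈ x → ∀ β ∈ α, ∃ n, g n = β) := by
      intro α
      by_cases hα : α ∈ x
      · rcases ZFSet.eq_empty_or_nonempty α with rfl | hαne
        · exact ⟨fun _ => ∅, fun _ => hempty,
            fun _ β hβ => absurd hβ (ZFSet.notMem_empty β)⟩
        · obtain ⟨w, hw⟩ := hαne
          have hsne : α.toSet.Nonempty := ⟨w, hw⟩
          obtain ⟨f, hf⟩ := (Set.countable_iff_exists_surjective hsne).1 (hcount α hα)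
          refine ⟨fun n => (f n).1, fun n => hx.1 α hα (f n).2, fun _ β hβ => ?_⟩
          obtain ⟨n, hn⟩ := hf ⟨β, hβ⟩
          exact ⟨n, congrArg Subtype.val hn⟩
      · exact ⟨fun _ => ∅, fun _ => hempty, fun h => absurd h hα⟩
    choose g hg1 hg2 using hgex
    set F : ZFSet := ZFSet.sep
      (fun p => ∃ (n : ℕ) (α : ZFSet), α ∈ x ∧
        p = ZFSet.pair (ZFSet.pair (VN n) α) (g α n))
      (ZFSet.prod (ZFSet.prod ZFSet.omega x) x) with hF
    have memF : ∀ p, p ∈ F ↔ ∃ (n : ℕ) (α : ZFSet), α ∈ x ∧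
        p = ZFSet.pair (ZFSet.pair (VN n) α) (g α n) := by
      intro p
      rw [hF, ZFSet.mem_sep]
      refine ⟨And.right, ?_⟩
      rintro ⟨n, α, hα, rfl⟩
      exact ⟨ZFSet.pair_mem_prod.2 ⟨ZFSet.pair_mem_prod.2 ⟨VN_mem_omega n, hα⟩, hg1 α n⟩,
        n, α, hα, rfl⟩
    refine ⟨⟨hcard, by rw [hone]; exact Cardinal.aleph0_lt_aleph_one⟩,
      F, ⟨?_, ?_⟩, ?_, ?_, ?_⟩
    · intro p hp
      obtain ⟨n, α, hα, rfl⟩ := (memF p).1 hp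
      exact ⟨_, _, rfl⟩
    · intro a b b' hb hb'
      obtain ⟨n, α, hα, he⟩ := (memF _).1 hb
      obtain ⟨n', α', hα', he'⟩ := (memF _).1 hb'
      obtain ⟨ha1, rfl⟩ := ZFSet.pair_injective he
      obtain ⟨ha2, rfl⟩ := ZFSet.pair_injective he'
      obtain ⟨hn, rfl⟩ := ZFSet.pair_injective (ha1.symm.trans ha2)
      rw [VN_inj hn]
    · apply ZFSet.ext
      intro p
      rw [mem_zfDom]
      constructor
      · rintro ⟨b, hb⟩
        obtain ⟨n, α, hα, he⟩ := (memF _).1 hb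
        obtain ⟨rfl, -⟩ := ZFSet.pair_injective he
        exact ZFSet.pair_mem_prod.2 ⟨VN_mem_omega n, hα⟩
      · intro hp
        obtain ⟨a, ha, b, hb, rfl⟩ := ZFSet.mem_prod.1 hp
        obtain ⟨n, rfl⟩ := mem_omega_iff.1 ha
        exact ⟨g b n, (memF _).2 ⟨n, b, hb, rfl⟩⟩
    · intro b hb
      obtain ⟨a, ha⟩ := mem_zfRan.1 hb
      obtain ⟨n, α, hα, he⟩ := (memF _).1 ha
      obtain ⟨-, rfl⟩ := ZFSet.pair_injective he
      exact hg1 α n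
    · intro α hα β hβ
      obtain ⟨n, hn⟩ := hg2 α hα β hβ
      exact ⟨VN n, VN_mem_omega n, (memF _).2 ⟨n, α, hα, by rw [hn]⟩⟩
  · rintro ⟨⟨hcard, haleph⟩, F, hFfun, hFdom, hFran, hFsurj⟩
    refine ⟨hcard, le_antisymm ?_ ?_⟩
    · apply card_le_aleph_one hx
      intro α hα
      set f : ℕ → ZFSet := fun k =>
        if h : ∃ β, ZFSet.pair (ZFSet.pair (VN k) α) β ∈ F then h.choose else ∅ with hf
      have hsub : α.toSet ⊆ Set.range f := by
        intro β hβ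
        obtain ⟨n, hn, hpair⟩ := hFsurj α hα β hβ
        obtain ⟨k, rfl⟩ := mem_omega_iff.1 hn
        have hex : ∃ β', ZFSet.pair (ZFSet.pair (VN k) α) β' ∈ F := ⟨β, hpair⟩
        refine ⟨k, ?_⟩
        rw [hf]
        simp only [dif_pos hex]
        exact hFfun.2 _ _ _ hex.choose_spec hpair
      exact (Set.countable_range f).mono hsub
    · have h1 : Order.succ Cardinal.aleph0 ≤ Cardinal.mk ↥x.toSet :=
        Order.succ_le_of_lt haleph
      rwa [Cardinal.succ_aleph0] at h1
end ZFCCompanion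
end
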